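/- arXiv:0906.1091 — 2 statements merged into one kernel-verified Lean document; each statement's English description precedes it below -/
import Mathlib

section
/- Let a ∈ Λₙ and u a nontrivial solution of u'' + au = 0, u'(0) = u'(L) = 0, with zeros of u' given by 0 = x₀ < x₂ < … < x_{2m} = L and zeros of u given by x₁ < x₃ < … < x_{2m-1}. Then ‖a - λₙ‖_{L¹(0,L)} ≥ (nπ/L) · Σ_{i=0}^{2m-1} cot((nπ/L)(x_{i+1} - x_i)). -/
/-!
On each interval between consecutive nodes `x i`, `x (i + 1)`, the function `u` has one sign and
vanishes at one end while `v = u'` vanishes at the other. Reflecting the interval and replacing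
`u` by `-u` if necessary, it is `[α, β]` with `v α = 0`, `u β = 0` and `u > 0` on `[α, β)`. Put
`ρ = nπ/L` and `θ = ρ (β - α)`. The Wronskians of `u` with `cos ρ(t - α)` and `sin ρ(t - α)`
change by integrals of `(ρ² - a) u cos` and `(ρ² - a) u sin`, which are `≤ 0`. This gives
`θ ≤ π/2`, then `ρ u(α) ≤ -v(β) sin θ`, and, since `u` decreases, `-v(β) cos θ ≤ u(α) ∫ (a - ρ²)`.
Hence `ρ cot θ ≤ ∫_α^β (a - ρ²)`, and summing over the `2m` intervals gives the claim.

The hypotheses state `u' = v`, `v' = -a u` through integrals that mean something only once `a u`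
is integrable. It is: otherwise `v` would vanish on a whole interval ending at `L`, whereas near
`L` the function `u` keeps one sign, is therefore concave or convex, and is bounded.
-/

open MeasureTheory Real Set intervalIntegral Filter

theorem IsPreconnected.forall_pos_or_forall_neg {s : Set ℝ} {f : ℝ → ℝ} (hs : IsPreconnected s)
    (hf : ContinuousOn f s) (hne : ∀ x ∈ s, f x ≠ 0) :
    (∀ x ∈ s, 0 < f x) ∨ ∀ x ∈ s, f x < 0 := by
  by_contra! hcon
  obtain ⟨⟨x, hx, hfx⟩, y, hy, hfy⟩ := hcon
  obtain ⟨z, hz, hfz⟩ := hs.intermediate_value hx hy hf ⟨hfx, hfy⟩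
  exact hne z hz hfz

theorem continuousOn_Ico_of_forall_continuousOn_Icc {f : ℝ → ℝ} {α β : ℝ}
    (h : ∀ s ∈ Ico α β, ContinuousOn f (Icc α s)) : ContinuousOn f (Ico α β) := by
  intro t ht
  have hs : (t + β) / 2 ∈ Ico α β := ⟨by linarith [ht.1, ht.2], by linarith [ht.2]⟩
  refine (h _ hs t ⟨ht.1, by linarith [ht.2]⟩).mono_of_mem_nhdsWithin ?_
  filter_upwards [self_mem_nhdsWithin, nhdsWithin_le_nhds (Iio_mem_nhds (by linarith [ht.2] :
    t < (t + β) / 2))] with s hs' hs'' using ⟨hs'.1, le_of_lt hs''⟩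

theorem absolutelyContinuousOnInterval_of_hasDerivAt {f f' : ℝ → ℝ}
    (hf : ∀ t, HasDerivAt f (f' t) t) (hf' : Continuous f') (a b : ℝ) :
    AbsolutelyContinuousOnInterval f a b := by
  refine ContDiff.contDiffOn (contDiff_one_iff_deriv.2 ⟨fun t => (hf t).differentiableAt, ?_⟩)
    |>.absolutelyContinuousOnInterval
  rwa [show deriv f = f' from funext fun t => (hf t).deriv]

theorem hasDerivAt_sin_mul_sub (ρ c t : ℝ) :
    HasDerivAt (fun t => sin (ρ * (t - c))) (ρ * cos (ρ * (t - c))) t := by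
  convert (((hasDerivAt_id' t).sub_const c).const_mul ρ).sin using 1
  ring

theorem hasDerivAt_cos_mul_sub (ρ c t : ℝ) :
    HasDerivAt (fun t => cos (ρ * (t - c))) (-(ρ * sin (ρ * (t - c)))) t := by
  convert (((hasDerivAt_id' t).sub_const c).const_mul ρ).cos using 1
  ring

theorem AbsolutelyContinuousOnInterval.congr {f g : ℝ → ℝ} {a b : ℝ}
    (hf : AbsolutelyContinuousOnInterval f a b) (hfg : EqOn f g (uIcc a b)) :
    AbsolutelyContinuousOnInterval g a b := by
  refine hf.congr' (eventually_inf_principal.2 (Eventually.of_forall fun E hE => ?_))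
  exact Finset.sum_congr rfl fun i hi => by rw [hfg (hE.1 i hi).1, hfg (hE.1 i hi).2]

theorem IntervalIntegrable.comp_add_sub {f : ℝ → ℝ} {α β : ℝ}
    (hf : IntervalIntegrable f volume α β) :
    IntervalIntegrable (fun t => f (α + β - t)) volume α β := by
  have := hf.comp_sub_left (α + β)
  rw [add_sub_cancel_left, add_sub_cancel_right] at this
  exact this.symm

theorem ae_comp_add_sub_of_ae_mem_Icc {p : ℝ → Prop} {α β : ℝ}
    (h : ∀ᵐ t, t ∈ Icc α β → p t) : ∀ᵐ t, t ∈ Icc α β → p (α + β - t) := by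
  filter_upwards [(Measure.measurePreserving_sub_left volume (α + β)).quasiMeasurePreserving.ae h]
    with t ht htI using ht ⟨by linarith [htI.2], by linarith [htI.1]⟩

theorem integral_sub_mul_nonneg {a f : ℝ → ℝ} {c α β : ℝ} (hαβ : α ≤ β)
    (ha : ∀ᵐ t, t ∈ Icc α β → c ≤ a t) (hf : ∀ t ∈ Icc α β, 0 ≤ f t) :
    0 ≤ ∫ t in α..β, (a t - c) * f t := by
  refine intervalIntegral.integral_nonneg_of_ae_restrict hαβ
    ((ae_restrict_iff' measurableSet_Icc).2 ?_)
  filter_upwards [ha] with t hat ht using mul_nonneg (sub_nonneg.2 (hat ht)) (hf t ht)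

theorem integral_sub_mul_le_of_le {a w : ℝ → ℝ} {c M α β : ℝ} (hαβ : α ≤ β)
    (ha : IntervalIntegrable a volume α β) (hw : ContinuousOn w (Icc α β))
    (hca : ∀ᵐ t, t ∈ Icc α β → c ≤ a t) (hwM : ∀ t ∈ Icc α β, w t ≤ M) :
    ∫ t in α..β, (a t - c) * w t ≤ (∫ t in α..β, (a t - c)) * M := by
  have hac := ha.sub (intervalIntegrable_const (c := c))
  rw [← intervalIntegral.integral_mul_const]
  refine intervalIntegral.integral_mono_ae_restrict hαβ
    (hac.mul_continuousOn (by rwa [uIcc_of_le hαβ])) (hac.mul_const _)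
    ((ae_restrict_iff' measurableSet_Icc).2 ?_)
  filter_upwards [hca] with t hct ht using
    mul_le_mul_of_nonneg_left (hwM t ht) (sub_nonneg.2 (hct ht))

theorem StrictMonoOn.notMem_Ioo_succ {x : ℕ → ℝ} {N i j : ℕ} (hx : StrictMonoOn x (Iic N))
    (hi : i < N) (hj : j ≤ N) : x j ∉ Ioo (x i) (x (i + 1)) := fun hxj => by
  have h1 := (hx.lt_iff_lt (mem_Iic.2 hi.le) (mem_Iic.2 hj)).1 hxj.1
  have h2 := (hx.lt_iff_lt (mem_Iic.2 hj) (mem_Iic.2 hi)).1 hxj.2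
  omega

theorem sum_le_integral_abs_of_le_integral {c x : ℕ → ℝ} {N : ℕ} {f : ℝ → ℝ}
    (hx : MonotoneOn x (Iic N)) (hf : IntervalIntegrable f volume (x 0) (x N))
    (hc : ∀ i < N, c i ≤ ∫ t in x i..x (i + 1), f t) :
    ∑ i ∈ Finset.range N, c i ≤ ∫ t in x 0..x N, |f t| := by
  have hx0N : x 0 ≤ x N := hx (mem_Iic.2 (Nat.zero_le N)) (mem_Iic.2 le_rfl) (Nat.zero_le N)
  have hmem : ∀ i ≤ N, x i ∈ Icc (x 0) (x N) := fun i hi =>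
    ⟨hx (mem_Iic.2 (Nat.zero_le N)) (mem_Iic.2 hi) (Nat.zero_le i),
      hx (mem_Iic.2 hi) (mem_Iic.2 le_rfl) hi⟩
  calc ∑ i ∈ Finset.range N, c i
      ≤ ∑ i ∈ Finset.range N, ∫ t in x i..x (i + 1), f t :=
        Finset.sum_le_sum fun i hi => hc i (Finset.mem_range.1 hi)
    _ = ∫ t in x 0..x N, f t := intervalIntegral.sum_integral_adjacent_intervals fun i hi =>
        hf.mono_set (by
          rw [uIcc_of_le hx0N]
          exact uIcc_subset_Icc (hmem i hi.le) (hmem (i + 1) hi))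
    _ ≤ ∫ t in x 0..x N, |f t| :=
        intervalIntegral.integral_mono_on hx0N hf hf.abs fun t _ => le_abs_self _

section Primitive

variable {G g : ℝ → ℝ} {α β : ℝ}

theorem continuousOn_of_eq_add_integral (hg : IntervalIntegrable g volume α β)
    (hG : ∀ t ∈ Icc α β, G t = G α + ∫ r in α..t, g r) : ContinuousOn G (Icc α β) :=
  ((continuousOn_const.add (intervalIntegral.continuousOn_primitive_interval' hg
    left_mem_uIcc)).mono Icc_subset_uIcc).congr hG

theorem eq_add_integral_of_eq_add_integral (hg : IntervalIntegrable g volume α β)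
    (hG : ∀ t ∈ Icc α β, G t = G α + ∫ r in α..t, g r) {s t : ℝ} (hs : s ∈ Icc α β)
    (ht : t ∈ Icc α β) : G t = G s + ∫ r in s..t, g r := by
  have hsub : ∀ c ∈ Icc α β, IntervalIntegrable g volume α c := fun c hc =>
    hg.mono_set (uIcc_subset_uIcc left_mem_uIcc (Icc_subset_uIcc hc))
  rw [hG t ht, hG s hs, ← intervalIntegral.integral_interval_sub_left (hsub t ht) (hsub s hs)]
  ring

theorem absolutelyContinuousOnInterval_of_eq_add_integral (hαβ : α ≤ β)
    (hg : IntervalIntegrable g volume α β) (hG : ∀ t ∈ Icc α β, G t = G α + ∫ r in α..t, g r) :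
    AbsolutelyContinuousOnInterval G α β := by
  have hprim := hg.absolutelyContinuousOnInterval_intervalIntegral (c := α) left_mem_uIcc
  refine ((contDiffOn_const (c := G α)).absolutelyContinuousOnInterval.add hprim).congr
    fun t ht => ?_
  rw [uIcc_of_le hαβ] at ht
  exact (hG t ht).symm

theorem ae_hasDerivAt_of_eq_add_integral (hg : IntervalIntegrable g volume α β)
    (hG : ∀ t ∈ Icc α β, G t = G α + ∫ r in α..t, g r) :
    ∀ᵐ x, x ∈ Ioo α β → HasDerivAt G (g x) x := by
  filter_upwards [hg.ae_hasDerivAt_integral] with x hx hxI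
  have hxu : x ∈ uIcc α β := Icc_subset_uIcc (Ioo_subset_Icc_self hxI)
  refine ((hx hxu α left_mem_uIcc).const_add (G α)).congr_of_eventuallyEq ?_
  filter_upwards [Icc_mem_nhds hxI.1 hxI.2] with t ht using hG t ht

end Primitive

/-- `u'' + a u = 0` on `[α, β]` in integrated first-order form, with `v = u'`. -/
structure IsSolutionOn (a u v : ℝ → ℝ) (α β : ℝ) : Prop where
  intervalIntegrable_mul : IntervalIntegrable (fun t => a t * u t) volume α β
  eq_u : ∀ t ∈ Icc α β, u t = u α + ∫ r in α..t, v r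
  eq_v : ∀ t ∈ Icc α β, v t = v α - ∫ r in α..t, a r * u r

namespace IsSolutionOn

variable {a u v : ℝ → ℝ} {α β : ℝ}

theorem eq_v_add (h : IsSolutionOn a u v α β) :
    ∀ t ∈ Icc α β, v t = v α + ∫ r in α..t, -(a r * u r) := fun t ht => by
  rw [intervalIntegral.integral_neg, ← sub_eq_add_neg, h.eq_v t ht]

theorem continuousOn_v (h : IsSolutionOn a u v α β) : ContinuousOn v (Icc α β) :=
  continuousOn_of_eq_add_integral h.intervalIntegrable_mul.neg h.eq_v_add

theorem intervalIntegrable_v (h : IsSolutionOn a u v α β) (hαβ : α ≤ β) :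
    IntervalIntegrable v volume α β :=
  h.continuousOn_v.intervalIntegrable_of_Icc hαβ

theorem continuousOn_u (h : IsSolutionOn a u v α β) (hαβ : α ≤ β) : ContinuousOn u (Icc α β) :=
  continuousOn_of_eq_add_integral (h.intervalIntegrable_v hαβ) h.eq_u

theorem eq_u_add (h : IsSolutionOn a u v α β) (hαβ : α ≤ β) {s t : ℝ} (hs : s ∈ Icc α β)
    (ht : t ∈ Icc α β) : u t = u s + ∫ r in s..t, v r :=
  eq_add_integral_of_eq_add_integral (h.intervalIntegrable_v hαβ) h.eq_u hs ht

theorem eq_v_sub (h : IsSolutionOn a u v α β) {s t : ℝ} (hs : s ∈ Icc α β)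
    (ht : t ∈ Icc α β) : v t = v s - ∫ r in s..t, a r * u r := by
  rw [eq_add_integral_of_eq_add_integral (g := fun r => -(a r * u r))
    h.intervalIntegrable_mul.neg h.eq_v_add hs ht,
    intervalIntegral.integral_neg, sub_eq_add_neg]

theorem mono (h : IsSolutionOn a u v α β) {α' β' : ℝ} (hα : α ≤ α') (hαβ' : α' ≤ β')
    (hβ : β' ≤ β) : IsSolutionOn a u v α' β' := by
  have hsub : Icc α' β' ⊆ Icc α β := Icc_subset_Icc hα hβ
  have hα' : α' ∈ Icc α β := hsub (left_mem_Icc.2 hαβ')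
  have hαβ : α ≤ β := hα.trans (hαβ'.trans hβ)
  refine ⟨h.intervalIntegrable_mul.mono_set ?_, fun t ht => h.eq_u_add hαβ hα' (hsub ht),
    fun t ht => h.eq_v_sub hα' (hsub ht)⟩
  rw [uIcc_of_le hαβ', uIcc_of_le hαβ]
  exact hsub

theorem neg (h : IsSolutionOn a u v α β) : IsSolutionOn a (fun t => -u t) (fun t => -v t) α β where
  intervalIntegrable_mul := by simp only [mul_neg]; exact h.intervalIntegrable_mul.neg
  eq_u t ht := by rw [intervalIntegral.integral_neg, h.eq_u t ht]; ring
  eq_v t ht := by simp only [mul_neg, intervalIntegral.integral_neg, h.eq_v t ht]; ring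

theorem reflect (h : IsSolutionOn a u v α β) (hαβ : α ≤ β) :
    IsSolutionOn (fun t => a (α + β - t)) (fun t => u (α + β - t)) (fun t => -v (α + β - t))
      α β := by
  have hmem : ∀ t ∈ Icc α β, α + β - t ∈ Icc α β := fun t ht =>
    ⟨by linarith [ht.2], by linarith [ht.1]⟩
  have hβ : β ∈ Icc α β := right_mem_Icc.2 hαβ
  refine ⟨?_, fun t ht => ?_, fun t ht => ?_⟩
  · exact h.intervalIntegrable_mul.comp_add_sub
  · rw [intervalIntegral.integral_neg, intervalIntegral.integral_comp_sub_left (fun r => v r),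
      add_sub_cancel_left, h.eq_u_add hαβ (hmem t ht) hβ]
    ring
  · rw [intervalIntegral.integral_comp_sub_left (fun r => a r * u r), add_sub_cancel_left,
      h.eq_v_sub (hmem t ht) hβ]
    ring

theorem absolutelyContinuousOnInterval_u (h : IsSolutionOn a u v α β) (hαβ : α ≤ β) :
    AbsolutelyContinuousOnInterval u α β :=
  absolutelyContinuousOnInterval_of_eq_add_integral hαβ (h.intervalIntegrable_v hαβ) h.eq_u

theorem absolutelyContinuousOnInterval_v (h : IsSolutionOn a u v α β) (hαβ : α ≤ β) :
    AbsolutelyContinuousOnInterval v α β :=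
  absolutelyContinuousOnInterval_of_eq_add_integral (g := fun r => -(a r * u r)) hαβ
    h.intervalIntegrable_mul.neg h.eq_v_add

theorem ae_hasDerivAt_u (h : IsSolutionOn a u v α β) (hαβ : α ≤ β) :
    ∀ᵐ x, x ∈ Ioo α β → HasDerivAt u (v x) x :=
  ae_hasDerivAt_of_eq_add_integral (h.intervalIntegrable_v hαβ) h.eq_u

theorem ae_hasDerivAt_v (h : IsSolutionOn a u v α β) :
    ∀ᵐ x, x ∈ Ioo α β → HasDerivAt v (-(a x * u x)) x :=
  ae_hasDerivAt_of_eq_add_integral (g := fun r => -(a r * u r)) h.intervalIntegrable_mul.neg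
    h.eq_v_add

/-- The Wronskian `v φ - u φ'` of `u` and a solution `φ` of `φ'' + ρ² φ = 0` has derivative
`(ρ² - a) u φ`. -/
theorem wronskian_sub_wronskian (h : IsSolutionOn a u v α β) (hαβ : α ≤ β) {ρ : ℝ}
    {φ φ' : ℝ → ℝ} (hφ : ∀ t, HasDerivAt φ (φ' t) t)
    (hφ' : ∀ t, HasDerivAt φ' (-(ρ ^ 2 * φ t)) t) :
    (v α * φ α - u α * φ' α) - (v β * φ β - u β * φ' β) =
      ∫ r in α..β, (a r - ρ ^ 2) * (u r * φ r) := by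
  have hφc : Continuous φ := continuous_iff_continuousAt.2 fun t => (hφ t).continuousAt
  have hφ'c : Continuous φ' := continuous_iff_continuousAt.2 fun t => (hφ' t).continuousAt
  have hW : AbsolutelyContinuousOnInterval (v * φ - u * φ') α β :=
    ((h.absolutelyContinuousOnInterval_v hαβ).mul
      (absolutelyContinuousOnInterval_of_hasDerivAt hφ hφ'c α β)).sub
    ((h.absolutelyContinuousOnInterval_u hαβ).mul
      (absolutelyContinuousOnInterval_of_hasDerivAt hφ' (continuous_const.mul hφc).neg α β))
  have hderiv : ∀ᵐ x, x ∈ uIoc α β →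
      deriv (v * φ - u * φ') x = -((a x - ρ ^ 2) * (u x * φ x)) := by
    filter_upwards [h.ae_hasDerivAt_v, h.ae_hasDerivAt_u hαβ, Measure.ae_ne volume β]
      with x hv hu hxβ hx
    rw [uIoc_of_le hαβ] at hx
    have hxI : x ∈ Ioo α β := ⟨hx.1, lt_of_le_of_ne hx.2 hxβ⟩
    rw [(((hv hxI).mul (hφ x)).sub ((hu hxI).mul (hφ' x))).deriv]
    ring
  have hFTC := hW.integral_deriv_eq_sub
  rw [intervalIntegral.integral_congr_ae hderiv, intervalIntegral.integral_neg] at hFTC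
  simp only [Pi.sub_apply, Pi.mul_apply] at hFTC
  linarith

theorem wronskian_cos (h : IsSolutionOn a u v α β) (hαβ : α ≤ β) (ρ : ℝ) :
    v α - (v β * cos (ρ * (β - α)) + ρ * (u β * sin (ρ * (β - α)))) =
      ∫ r in α..β, (a r - ρ ^ 2) * (u r * cos (ρ * (r - α))) := by
  have := h.wronskian_sub_wronskian hαβ (hasDerivAt_cos_mul_sub ρ α) fun t =>
    ((hasDerivAt_sin_mul_sub ρ α t).const_mul ρ).neg.congr_deriv (by ring)
  simpa [mul_comm, mul_left_comm] using this

theorem wronskian_sin (h : IsSolutionOn a u v α β) (hαβ : α ≤ β) (ρ : ℝ) :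
    -(ρ * u α) - (v β * sin (ρ * (β - α)) - ρ * (u β * cos (ρ * (β - α)))) =
      ∫ r in α..β, (a r - ρ ^ 2) * (u r * sin (ρ * (r - α))) := by
  have := h.wronskian_sub_wronskian hαβ (hasDerivAt_sin_mul_sub ρ α) fun t =>
    ((hasDerivAt_cos_mul_sub ρ α t).const_mul ρ).congr_deriv (by ring)
  simpa [mul_comm, mul_left_comm] using this

/-- Where `a u ≥ 0`, `u` is concave, so it lies below its tangent at `α`. -/
theorem le_tangent (h : IsSolutionOn a u v α β)
    (ha : ∀ᵐ t, t ∈ Icc α β → 0 ≤ a t) (hu : ∀ t ∈ Icc α β, 0 ≤ u t) :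
    ∀ t ∈ Icc α β, u t ≤ u α + (t - α) * v α := by
  intro t ht
  have hv : ∀ r ∈ Icc α t, v r ≤ v α := fun r hr => by
    have hrI : r ∈ Icc α β := Icc_subset_Icc le_rfl ht.2 hr
    have := integral_sub_mul_nonneg (c := 0) hr.1 (f := u)
      (ha.mono fun s hs hsr => hs (Icc_subset_Icc le_rfl hrI.2 hsr))
      fun s hs => hu s (Icc_subset_Icc le_rfl hrI.2 hs)
    simp only [sub_zero] at this
    linarith [h.eq_v r hrI]
  have hvi : IntervalIntegrable v volume α t := (h.mono le_rfl ht.1 ht.2).intervalIntegrable_v ht.1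
  have := intervalIntegral.integral_mono_on ht.1 hvi intervalIntegrable_const hv
  rw [intervalIntegral.integral_const, smul_eq_mul] at this
  linarith [h.eq_u t ht]

/-- Sturm comparison with `cos (ρ (t - α))`. -/
theorem mul_sub_le_pi_div_two (h : IsSolutionOn a u v α β) {ρ : ℝ} (hρ : 0 < ρ)
    (hρa : ∀ᵐ t, t ∈ Icc α β → ρ ^ 2 ≤ a t) (hvα : v α = 0) (hu : ∀ t ∈ Ico α β, 0 < u t) :
    ρ * (β - α) ≤ π / 2 := by
  by_contra! hlt
  set t := α + π / (2 * ρ)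
  have harg : ρ * (t - α) = π / 2 := by simp only [t]; field_simp; ring
  have hαt : α ≤ t := le_add_of_nonneg_right (by positivity)
  have htβ : t < β := by
    by_contra! hβt
    nlinarith [mul_le_mul_of_nonneg_left (sub_le_sub_right hβt α) hρ.le]
  have hW := (h.mono le_rfl hαt htβ.le).wronskian_cos hαt ρ
  rw [harg, cos_pi_div_two, sin_pi_div_two, hvα] at hW
  have hint := integral_sub_mul_nonneg hαt
    (hρa.mono fun s hs hst => hs (Icc_subset_Icc le_rfl htβ.le hst))
    (f := fun s => u s * cos (ρ * (s - α))) fun s hs =>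
      mul_nonneg (hu s ⟨hs.1, hs.2.trans_lt htβ⟩).le
        (cos_nonneg_of_mem_Icc ⟨by nlinarith [pi_pos, hs.1], by nlinarith [hs.2]⟩)
  nlinarith [hu t ⟨hαt, htβ⟩]

theorem cot_le_integral_of_pos (h : IsSolutionOn a u v α β) (hαβ : α < β) {ρ : ℝ} (hρ : 0 < ρ)
    (ha : IntervalIntegrable a volume α β) (hρa : ∀ᵐ t, t ∈ Icc α β → ρ ^ 2 ≤ a t)
    (hvα : v α = 0) (huβ : u β = 0) (hu : ∀ t ∈ Ico α β, 0 < u t) :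
    ρ * cot (ρ * (β - α)) ≤ ∫ t in α..β, (a t - ρ ^ 2) := by
  have hu0 : ∀ t ∈ Icc α β, 0 ≤ u t := fun t ht =>
    (eq_or_lt_of_le ht.2).elim (fun htβ => htβ ▸ huβ.ge) fun htβ => (hu t ⟨ht.1, htβ⟩).le
  have hu_le : ∀ t ∈ Icc α β, u t ≤ u α := fun t ht => by
    simpa [hvα] using h.le_tangent
      (hρa.mono fun s hs hsI => (sq_nonneg ρ).trans (hs hsI)) hu0 t ht
  have hquarter := h.mul_sub_le_pi_div_two hρ hρa hvα hu
  set θ := ρ * (β - α) with hθ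
  have hθ0 : 0 < θ := mul_pos hρ (sub_pos.2 hαβ)
  have hsin : 0 < sin θ := sin_pos_of_pos_of_lt_pi hθ0 (by linarith [pi_pos])
  have hcos : 0 ≤ cos θ := cos_nonneg_of_mem_Icc ⟨by linarith [pi_pos], hquarter⟩
  have hsinW := h.wronskian_sin hαβ.le ρ
  rw [huβ, ← hθ] at hsinW
  have hsin_int := integral_sub_mul_nonneg hαβ.le hρa (f := fun s => u s * sin (ρ * (s - α)))
    fun s hs => mul_nonneg (hu0 s hs) (sin_nonneg_of_nonneg_of_le_pi
      (mul_nonneg hρ.le (sub_nonneg.2 hs.1)) (by nlinarith [hs.2, pi_pos]))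
  have hcosW := h.wronskian_cos hαβ.le ρ
  rw [huβ, hvα, ← hθ] at hcosW
  have hcos_int := integral_sub_mul_le_of_le hαβ.le ha (M := u α) (w := fun s =>
      u s * cos (ρ * (s - α)))
    ((h.continuousOn_u hαβ.le).mul (continuous_cos.comp (continuous_const.mul
      (continuous_id.sub continuous_const))).continuousOn) hρa fun s hs =>
    (mul_le_of_le_one_right (hu0 s hs) (cos_le_one _)).trans (hu_le s hs)
  have hρu : ρ * u α ≤ -v β * sin θ := by linarith
  have hvu : -v β * cos θ ≤ (∫ s in α..β, (a s - ρ ^ 2)) * u α := by linarith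
  rw [cot_eq_cos_div_sin, mul_div_assoc', div_le_iff₀ hsin]
  refine le_of_mul_le_mul_left ?_ (hu α ⟨le_rfl, hαβ⟩)
  nlinarith [mul_le_mul_of_nonneg_right hρu hcos, mul_le_mul_of_nonneg_right hvu hsin.le]

theorem cot_le_integral_of_v_eq_zero_of_u_eq_zero (h : IsSolutionOn a u v α β) (hαβ : α < β)
    {ρ : ℝ} (hρ : 0 < ρ) (ha : IntervalIntegrable a volume α β)
    (hρa : ∀ᵐ t, t ∈ Icc α β → ρ ^ 2 ≤ a t) (hvα : v α = 0) (huβ : u β = 0)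
    (hu : ∀ t ∈ Ico α β, u t ≠ 0) :
    ρ * cot (ρ * (β - α)) ≤ ∫ t in α..β, (a t - ρ ^ 2) := by
  rcases isPreconnected_Ico.forall_pos_or_forall_neg
    ((h.continuousOn_u hαβ.le).mono Ico_subset_Icc_self) hu with hpos | hneg
  · exact h.cot_le_integral_of_pos hαβ hρ ha hρa hvα huβ hpos
  · exact h.neg.cot_le_integral_of_pos hαβ hρ ha hρa (by simp [hvα]) (by simp [huβ])
      fun t ht => neg_pos.2 (hneg t ht)

theorem cot_le_integral_of_u_eq_zero_of_v_eq_zero (h : IsSolutionOn a u v α β) (hαβ : α < β)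
    {ρ : ℝ} (hρ : 0 < ρ) (ha : IntervalIntegrable a volume α β)
    (hρa : ∀ᵐ t, t ∈ Icc α β → ρ ^ 2 ≤ a t) (huα : u α = 0) (hvβ : v β = 0)
    (hu : ∀ t ∈ Ioc α β, u t ≠ 0) :
    ρ * cot (ρ * (β - α)) ≤ ∫ t in α..β, (a t - ρ ^ 2) := by
  have := (h.reflect hαβ.le).cot_le_integral_of_v_eq_zero_of_u_eq_zero hαβ hρ ha.comp_add_sub
    (ae_comp_add_sub_of_ae_mem_Icc hρa) (by simp [hvβ]) (by simpa using huα)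
    fun t ht => hu _ ⟨by linarith [ht.2], by linarith [ht.1]⟩
  rwa [intervalIntegral.integral_comp_sub_left (fun t => a t - ρ ^ 2), add_sub_cancel_left,
    add_sub_cancel_right] at this

theorem abs_le_of_ne_zero (h : IsSolutionOn a u v α β) (ha : ∀ᵐ t, t ∈ Icc α β → 0 ≤ a t)
    (hu : ∀ t ∈ Icc α β, u t ≠ 0) : ∀ t ∈ Icc α β, |u t| ≤ |u α| + (β - α) * |v α| := by
  intro t ht
  have hαβ : α ≤ β := ht.1.trans ht.2
  have hslope : (t - α) * |v α| ≤ (β - α) * |v α| :=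
    mul_le_mul_of_nonneg_right (by linarith [ht.2]) (abs_nonneg _)
  rcases isPreconnected_Icc.forall_pos_or_forall_neg (h.continuousOn_u hαβ) hu with hpos | hneg
  · have := h.le_tangent ha (fun s hs => (hpos s hs).le) t ht
    rw [abs_of_pos (hpos t ht)]
    linarith [le_abs_self (u α), mul_le_mul_of_nonneg_left (le_abs_self (v α)) (sub_nonneg.2 ht.1)]
  · have := h.neg.le_tangent ha (fun s hs => (neg_pos.2 (hneg s hs)).le) t ht
    rw [abs_of_neg (hneg t ht)]
    linarith [neg_le_abs (u α), mul_le_mul_of_nonneg_left (neg_le_abs (v α)) (sub_nonneg.2 ht.1)]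

theorem cot_le_integral_of_interlacing {x : ℕ → ℝ} {N i : ℕ} {ρ : ℝ}
    (h : IsSolutionOn a u v α β) (hρ : 0 < ρ) (ha : IntervalIntegrable a volume α β)
    (hρa : ∀ᵐ t, t ∈ Icc α β → ρ ^ 2 ≤ a t) (hmono : StrictMonoOn x (Iic N))
    (hrange : ∀ i ≤ N, x i ∈ Icc α β) (hzv : ∀ i ≤ N, Even i → v (x i) = 0)
    (hzu : ∀ i ≤ N, Odd i → u (x i) = 0)
    (hallu : ∀ t ∈ Icc α β, u t = 0 → ∃ i ≤ N, Odd i ∧ t = x i) (hi : i < N) :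
    ρ * cot (ρ * (x (i + 1) - x i)) ≤ ∫ t in x i..x (i + 1), (a t - ρ ^ 2) := by
  have hxi : x i < x (i + 1) := hmono (mem_Iic.2 hi.le) (mem_Iic.2 hi) (Nat.lt_succ_self i)
  have hsub : Icc (x i) (x (i + 1)) ⊆ Icc α β :=
    Icc_subset_Icc (hrange i hi.le).1 (hrange (i + 1) hi).2
  have hsol := h.mono (hrange i hi.le).1 hxi.le (hrange (i + 1) hi).2
  have hαβ : α ≤ β := (hrange i hi.le).1.trans (hrange i hi.le).2
  have ha' : IntervalIntegrable a volume (x i) (x (i + 1)) := ha.mono_set (by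
    rw [uIcc_of_le hαβ, uIcc_of_le hxi.le]
    exact hsub)
  have hρa' := hρa.mono fun t h ht => h (hsub ht)
  have hmid : ∀ t ∈ Ioo (x i) (x (i + 1)), u t ≠ 0 := fun t ht hut => by
    obtain ⟨j, hj, -, rfl⟩ := hallu t (hsub (Ioo_subset_Icc_self ht)) hut
    exact hmono.notMem_Ioo_succ hi hj ht
  have hnode : ∀ k ≤ N, Even k → u (x k) ≠ 0 := fun k hk hk_even hxk => by
    obtain ⟨j, hj, hj_odd, hjk⟩ := hallu _ (hrange k hk) hxk
    rw [hmono.injOn (mem_Iic.2 hk) (mem_Iic.2 hj) hjk] at hk_even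
    exact Nat.not_even_iff_odd.2 hj_odd hk_even
  rcases Nat.even_or_odd i with hi_even | hi_odd
  · refine hsol.cot_le_integral_of_v_eq_zero_of_u_eq_zero hxi hρ ha' hρa'
      (hzv i hi.le hi_even) (hzu (i + 1) hi hi_even.add_one) fun t ht => ?_
    rcases eq_or_lt_of_le ht.1 with rfl | hlt
    · exact hnode i hi.le hi_even
    · exact hmid t ⟨hlt, ht.2⟩
  · refine hsol.cot_le_integral_of_u_eq_zero_of_v_eq_zero hxi hρ ha' hρa'
      (hzu i hi.le hi_odd) (hzv (i + 1) hi hi_odd.add_one) fun t ht => ?_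
    rcases eq_or_lt_of_le ht.2 with rfl | hlt
    · exact hnode (i + 1) hi hi_odd.add_one
    · exact hmid t ⟨ht.1, hlt⟩

end IsSolutionOn

theorem intervalIntegrable_mul_of_finite_zeros {a u v : ℝ → ℝ} {α β : ℝ}
    (hv : ∀ t ∈ Icc α β, v t = -∫ r in α..t, a r * u r) (hfin : {t ∈ Icc α β | v t = 0}.Finite) :
    ∀ s ∈ Ico α β, IntervalIntegrable (fun t => a t * u t) volume α s := by
  intro s hs
  by_contra hnot
  refine (Icc_infinite hs.2) (hfin.subset fun t ht => ⟨⟨hs.1.trans ht.1, ht.2⟩, ?_⟩)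
  rw [hv t ⟨hs.1.trans ht.1, ht.2⟩, intervalIntegral.integral_undef fun hint => hnot <|
    hint.mono_set (uIcc_subset_uIcc left_mem_uIcc (Icc_subset_uIcc ⟨hs.1, ht.1⟩)), neg_zero]

theorem isSolutionOn_of_finite_zeros {a u v : ℝ → ℝ} {α β ξ : ℝ} (hαβ : α < β)
    (ha : IntervalIntegrable a volume α β) (ha0 : ∀ᵐ t, t ∈ Icc α β → 0 ≤ a t)
    (hu : ∀ t ∈ Icc α β, u t = u α + ∫ r in α..t, v r)
    (hv : ∀ t ∈ Icc α β, v t = -∫ r in α..t, a r * u r)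
    (hvfin : {t ∈ Icc α β | v t = 0}.Finite) (hξ : ξ < β) (hune : ∀ t ∈ Ioo ξ β, u t ≠ 0) :
    IsSolutionOn a u v α β := by
  have hv' : ∀ t ∈ Icc α β, v t = v α - ∫ r in α..t, a r * u r := fun t ht => by
    rw [hv t ht, hv α (left_mem_Icc.2 hαβ.le), intervalIntegral.integral_same, neg_zero, zero_sub]
  have hsol : ∀ s ∈ Ico α β, IsSolutionOn a u v α s := fun s hs =>
    ⟨intervalIntegrable_mul_of_finite_zeros hv hvfin s hs,
      fun t ht => hu t (Icc_subset_Icc le_rfl hs.2.le ht),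
      fun t ht => hv' t (Icc_subset_Icc le_rfl hs.2.le ht)⟩
  set p := (max ξ α + β) / 2
  have hξp : ξ < p := by have := le_max_left ξ α; simp only [p]; linarith
  have hp : p ∈ Ico α β := by
    have := max_lt hξ hαβ
    have := le_max_right ξ α
    constructor <;> simp only [p] <;> linarith
  obtain ⟨C, hC⟩ := isCompact_Icc.exists_bound_of_continuousOn ((hsol p hp).continuousOn_u hp.1)
  have hbound : ∀ t ∈ Ioo α β, ‖u t‖ ≤ max C (|u p| + (β - p) * |v p|) := by
    intro t ht
    rcases le_total t p with htp | hpt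
    · exact (hC t ⟨ht.1.le, htp⟩).trans (le_max_left _ _)
    · have := ((hsol t ⟨ht.1.le, ht.2⟩).mono hp.1 hpt le_rfl).abs_le_of_ne_zero
        (ha0.mono fun s hs hsI => hs ⟨hp.1.trans hsI.1, hsI.2.trans ht.2.le⟩)
        (fun s hs => hune s ⟨hξp.trans_le hs.1, hs.2.trans_lt ht.2⟩) t ⟨hpt, le_rfl⟩
      refine (this.trans ?_).trans (le_max_right _ _)
      gcongr
      exact ht.2.le
  have hcont : ContinuousOn u (Ico α β) :=
    continuousOn_Ico_of_forall_continuousOn_Icc fun s hs => (hsol s hs).continuousOn_u hs.1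
  refine ⟨?_, hu, hv'⟩
  rw [intervalIntegrable_iff_integrableOn_Ioo_of_le hαβ.le] at ha ⊢
  have := ha.bdd_mul ((hcont.mono Ioo_subset_Ico_self).aestronglyMeasurable
    measurableSet_Ioo) ((ae_restrict_iff' measurableSet_Ioo).2 (Eventually.of_forall hbound))
  simp only [mul_comm] at this
  exact this

theorem L1_norm_ge_cot_sum_general (L : ℝ) (hL : 0 < L) (n : ℕ) (hn : 1 ≤ n)
    (a u v : ℝ → ℝ) (m : ℕ) (hm : 1 ≤ m) (x : ℕ → ℝ)
    (ha : IntegrableOn a (Ioo 0 L))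
    (hprec₁ : ∀ᵐ t ∂(volume.restrict (Ioo 0 L)), (n : ℝ) ^ 2 * π ^ 2 / L ^ 2 ≤ a t)
    (hu : ∀ t ∈ Icc (0:ℝ) L, u t = u 0 + ∫ s in (0:ℝ)..t, v s)
    (hv : ∀ t ∈ Icc (0:ℝ) L, v t = - ∫ s in (0:ℝ)..t, a s * u s)
    (hmono : StrictMonoOn x (Iic (2 * m)))
    (hx0 : x 0 = 0) (hxL : x (2 * m) = L)
    (hrange : ∀ i ≤ 2 * m, x i ∈ Icc (0:ℝ) L)
    (hzv : ∀ i ≤ 2 * m, Even i → v (x i) = 0)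
    (hzu : ∀ i ≤ 2 * m, Odd i → u (x i) = 0)
    (hallv : ∀ t ∈ Icc (0:ℝ) L, v t = 0 → ∃ i ≤ 2 * m, Even i ∧ t = x i)
    (hallu : ∀ t ∈ Icc (0:ℝ) L, u t = 0 → ∃ i ≤ 2 * m, Odd i ∧ t = x i) :
    (∫ t in (0:ℝ)..L, |a t - (n : ℝ) ^ 2 * π ^ 2 / L ^ 2|) ≥
      (n : ℝ) * π / L *
        ∑ i ∈ Finset.range (2 * m), Real.cot ((n : ℝ) * π / L * (x (i + 1) - x i)) := by
  set ρ := (n : ℝ) * π / L with hρ_def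
  have hρ : 0 < ρ := div_pos (mul_pos (Nat.cast_pos.2 hn) pi_pos) hL
  have hρsq : (n : ℝ) ^ 2 * π ^ 2 / L ^ 2 = ρ ^ 2 := by rw [hρ_def]; ring
  rw [hρsq] at hprec₁ ⊢
  have haI : IntervalIntegrable a volume 0 L :=
    (intervalIntegrable_iff_integrableOn_Ioo_of_le hL.le).2 ha
  have hρa : ∀ᵐ t, t ∈ Icc 0 L → ρ ^ 2 ≤ a t := by
    rwa [Measure.restrict_congr_set Ioo_ae_eq_Icc, ae_restrict_iff' measurableSet_Icc] at hprec₁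
  have hlast : 2 * m - 1 < 2 * m := by omega
  have hsol : IsSolutionOn a u v 0 L := by
    refine isSolutionOn_of_finite_zeros hL haI (hρa.mono fun t h ht => (sq_nonneg ρ).trans (h ht))
      hu hv (((finite_Iic (2 * m)).image x).subset fun t ⟨ht, hvt⟩ => ?_)
      (hxL ▸ hmono (mem_Iic.2 hlast.le) (mem_Iic.2 le_rfl) hlast) fun t ht hut => ?_
    · obtain ⟨i, hi, -, rfl⟩ := hallv t ht hvt
      exact mem_image_of_mem x (mem_Iic.2 hi)
    · obtain ⟨j, hj, -, rfl⟩ := hallu t ⟨(hrange _ hlast.le).1.trans ht.1.le, ht.2.le⟩ hut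
      exact hmono.notMem_Ioo_succ hlast hj (by rwa [Nat.sub_add_cancel (by omega), hxL])
  have hsum := sum_le_integral_abs_of_le_integral (f := fun t => a t - ρ ^ 2) hmono.monotoneOn
    (by rw [hx0, hxL]; exact haI.sub intervalIntegrable_const) fun i hi =>
      hsol.cot_le_integral_of_interlacing hρ haI hρa hmono hrange hzv hzu hallu hi
  rwa [hx0, hxL, ← Finset.mul_sum] at hsum

/-- if a ∈ Λₙ, u is a nontrivial solution of the Neumann problem with
zeros of u' being 0 = x₀ < x₂ < … < x_{2m} = L and zeros of u interlacing at the odd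
indices, then ‖a - λₙ‖_{L¹(0,L)} ≥ (nπ/L)·Σ_{i=0}^{2m-1} cot((nπ/L)(x_{i+1} - x_i)). -/
theorem L1_norm_ge_cot_sum (L : ℝ) (hL : 0 < L) (n : ℕ) (hn : 1 ≤ n)
    (a u v : ℝ → ℝ) (m : ℕ) (hm : 1 ≤ m) (x : ℕ → ℝ)
    (ha : IntegrableOn a (Ioo 0 L))
    (hprec₁ : ∀ᵐ t ∂(volume.restrict (Ioo 0 L)), (n : ℝ) ^ 2 * π ^ 2 / L ^ 2 ≤ a t)
    (hprec₂ : 0 < volume (Ioo 0 L ∩ {t | (n : ℝ) ^ 2 * π ^ 2 / L ^ 2 < a t}))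
    (hu : ∀ t ∈ Icc (0:ℝ) L, u t = u 0 + ∫ s in (0:ℝ)..t, v s)
    (hv : ∀ t ∈ Icc (0:ℝ) L, v t = - ∫ s in (0:ℝ)..t, a s * u s)
    (hvL : v L = 0)
    (hnontriv : ∃ t ∈ Icc (0:ℝ) L, u t ≠ 0)
    (hmono : StrictMonoOn x (Iic (2 * m)))
    (hx0 : x 0 = 0) (hxL : x (2 * m) = L)
    (hrange : ∀ i ≤ 2 * m, x i ∈ Icc (0:ℝ) L)
    (hzv : ∀ i ≤ 2 * m, Even i → v (x i) = 0)
    (hzu : ∀ i ≤ 2 * m, Odd i → u (x i) = 0)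
    (hallv : ∀ t ∈ Icc (0:ℝ) L, v t = 0 → ∃ i ≤ 2 * m, Even i ∧ t = x i)
    (hallu : ∀ t ∈ Icc (0:ℝ) L, u t = 0 → ∃ i ≤ 2 * m, Odd i ∧ t = x i) :
    (∫ t in (0:ℝ)..L, |a t - (n : ℝ) ^ 2 * π ^ 2 / L ^ 2|) ≥
      (n : ℝ) * π / L *
        ∑ i ∈ Finset.range (2 * m), Real.cot ((n : ℝ) * π / L * (x (i + 1) - x i)) :=
  L1_norm_ge_cot_sum_general L hL n hn a u v m hm x ha hprec₁ hu hv hmono hx0 hxL hrange hzv hzu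
    hallv hallu
end

section
/- Let 0 = y₀ < y₁ < … < y_{2n+1} < y_{2n+2} = L and define a on (0,L) by a(x) = π²/(4(y_{i+1}-y_i)²) for x ∈ (y_i, y_{i+1}), 0 ≤ i ≤ 2n+1. Then the Neumann problem u'' + au = 0, u'(0) = u'(L) = 0 has a nontrivial solution, given piecewise by u(x) = k_i cos(π(x - y_i)/(2(y_{i+1}-y_i))) for i even and u(x) = k_i cos(π(y_{i+1} - x)/(2(y_{i+1}-y_i))) for i odd, for appropriate nonzero constants k_i ensuring C¹ matching. -/
/-!
On `[y i, y (i + 1)]` the equation `u'' + ω² u = 0` with `ω = π / (2 (y (i + 1) - y i))` is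
solved by a cosine running over exactly a quarter period: from a crest (`u' = 0`) to a node
(`u = 0`) for even `i`, and from a node to a crest for odd `i`. Consecutive pieces thus meet
alternately at nodes, where both values vanish, and at crests, where both slopes vanish, so a
single amplitude condition per breakpoint makes the glued function `C¹`. Its derivative is
differentiable off the finitely many breakpoints with second derivative `-a u`, so the
fundamental theorem of calculus with a countable exceptional set gives the integral form of the
problem; the Neumann conditions hold because `0` and `L` are crests.
-/

open MeasureTheory Real Set intervalIntegral Filter

/-- `glue y p m x` is `p i x` for the largest `i ≤ m` with `y i ≤ x`, or `p 0 x` if none. -/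
noncomputable def glue (y : ℕ → ℝ) (p : ℕ → ℝ → ℝ) : ℕ → ℝ → ℝ
  | 0 => p 0
  | i + 1 => fun x => if y (i + 1) ≤ x then p (i + 1) x else glue y p i x

theorem hasDerivAt_ite_le {f g f' g' : ℝ → ℝ} {c : ℝ} (hf : ∀ x, HasDerivAt f (f' x) x)
    (hg : ∀ x, HasDerivAt g (g' x) x) (hfg : f c = g c) (hfg' : f' c = g' c) (t : ℝ) :
    HasDerivAt (fun x => if c ≤ x then g x else f x) (if c ≤ t then g' t else f' t) t := by
  rcases lt_trichotomy t c with htc | rfl | hct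
  · rw [if_neg htc.not_ge]
    exact (hf t).congr_of_eventuallyEq <|
      eventually_of_mem (Iio_mem_nhds htc) fun x hx => if_neg (not_le.2 hx)
  · rw [if_pos le_rfl]
    have hleft : HasDerivWithinAt (fun x => if t ≤ x then g x else f x) (g' t) (Iic t) t := by
      refine (hfg' ▸ (hf t).hasDerivWithinAt).congr (fun x hx => ?_) (by simp [hfg])
      rcases (mem_Iic.1 hx).lt_or_eq with hxt | rfl
      · exact if_neg hxt.not_ge
      · simp [hfg]
    have hright : HasDerivWithinAt (fun x => if t ≤ x then g x else f x) (g' t) (Ici t) t :=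
      (hg t).hasDerivWithinAt.congr (fun x hx => if_pos hx) (if_pos le_rfl)
    simpa [Iic_union_Ici] using hleft.union hright
  · rw [if_pos hct.le]
    exact (hg t).congr_of_eventuallyEq <|
      eventually_of_mem (Ioi_mem_nhds hct) fun x hx => if_pos hx.le

section Glue

variable {y : ℕ → ℝ} {p q r : ℕ → ℝ → ℝ} {m : ℕ}

theorem glue_succ (i : ℕ) (x : ℝ) :
    glue y p (i + 1) x = if y (i + 1) ≤ x then p (i + 1) x else glue y p i x := rfl

theorem glue_of_le : ∀ {i : ℕ} {x : ℝ}, y i ≤ x → glue y p i x = p i x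
  | 0, _, _ => rfl
  | _ + 1, _, h => if_pos h

theorem glue_eq_of_forall_lt {j : ℕ} {x : ℝ} (hj : j ≤ m) (hx : y j ≤ x)
    (hlt : ∀ l, j < l → l ≤ m → x < y l) : glue y p m x = p j x := by
  induction m with
  | zero =>
    obtain rfl : j = 0 := by omega
    rfl
  | succ m ih =>
    rcases hj.lt_or_eq with hjm | rfl
    · rw [glue_succ, if_neg (hlt (m + 1) hjm le_rfl).not_ge]
      exact ih (by omega) fun l hjl hlm => hlt l hjl (by omega)
    · exact glue_of_le hx

theorem glue_eq_of_mem_Ico (hy : MonotoneOn y (Iic (m + 1))) {j : ℕ} (hj : j ≤ m) {x : ℝ}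
    (hx : x ∈ Ico (y j) (y (j + 1))) : glue y p m x = p j x :=
  glue_eq_of_forall_lt hj hx.1 fun l hjl hlm =>
    hx.2.trans_le (hy (mem_Iic.2 (by omega)) (mem_Iic.2 (by omega)) hjl)

theorem glue_eq_of_mem_Icc (hy : StrictMonoOn y (Iic (m + 1)))
    (hp : ∀ i < m, p i (y (i + 1)) = p (i + 1) (y (i + 1))) {j : ℕ} (hj : j ≤ m) {x : ℝ}
    (hx : x ∈ Icc (y j) (y (j + 1))) : glue y p m x = p j x := by
  rcases hx.2.lt_or_eq with hlt | rfl
  · exact glue_eq_of_mem_Ico hy.monotoneOn hj ⟨hx.1, hlt⟩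
  rcases hj.lt_or_eq with hjm | rfl
  · rw [hp j hjm]
    exact glue_eq_of_forall_lt hjm le_rfl fun l hjl hlm =>
      hy (mem_Iic.2 (by omega)) (mem_Iic.2 (by omega)) hjl
  · exact glue_of_le hx.1

theorem continuous_glue (hy : MonotoneOn y (Iic m)) (hpc : ∀ i, Continuous (p i))
    (hp : ∀ i < m, p i (y (i + 1)) = p (i + 1) (y (i + 1))) : Continuous (glue y p m) := by
  induction m with
  | zero => exact hpc 0
  | succ m ih =>
    refine (hpc (m + 1)).if_le (ih (hy.mono (Iic_subset_Iic.2 m.le_succ))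
      fun i hi => hp i (by omega)) continuous_const continuous_id fun x hx => ?_
    rw [← hx, glue_of_le (hy (mem_Iic.2 m.le_succ) self_mem_Iic m.le_succ), hp m m.lt_succ_self]

theorem hasDerivAt_glue (hy : MonotoneOn y (Iic m)) (hpq : ∀ i x, HasDerivAt (p i) (q i x) x)
    (hp : ∀ i < m, p i (y (i + 1)) = p (i + 1) (y (i + 1)))
    (hq : ∀ i < m, q i (y (i + 1)) = q (i + 1) (y (i + 1))) (x : ℝ) :
    HasDerivAt (glue y p m) (glue y q m x) x := by
  induction m generalizing x with
  | zero => exact hpq 0 x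
  | succ m ih =>
    have hym := hy (mem_Iic.2 m.le_succ) self_mem_Iic m.le_succ
    exact hasDerivAt_ite_le (ih (hy.mono (Iic_subset_Iic.2 m.le_succ))
      (fun i hi => hp i (by omega)) (fun i hi => hq i (by omega))) (hpq (m + 1))
      (by rw [glue_of_le hym, hp m m.lt_succ_self])
      (by rw [glue_of_le hym, hq m m.lt_succ_self]) x

theorem intervalIntegrable_glue (hpc : ∀ i, Continuous (p i)) (c d : ℝ) :
    IntervalIntegrable (glue y p m) volume c d := by
  induction m with
  | zero => exact (hpc 0).intervalIntegrable c d
  | succ m ih =>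
    have hsplit : glue y p (m + 1) =
        glue y p m + (Ici (y (m + 1))).indicator (p (m + 1) - glue y p m) := by
      ext x
      by_cases hx : y (m + 1) ≤ x <;> simp [glue_succ, hx]
    rw [hsplit]
    refine ih.add ?_
    rw [intervalIntegrable_iff] at *
    exact (((hpc (m + 1)).intervalIntegrable c d).def'.sub ih).indicator measurableSet_Ici

theorem glue_apply_zero (hy : StrictMonoOn y (Iic m)) : glue y p m (y 0) = p 0 (y 0) :=
  glue_eq_of_forall_lt m.zero_le le_rfl fun _ hl hlm =>
    hy (mem_Iic.2 m.zero_le) (mem_Iic.2 hlm) hl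

theorem integral_glue_eq_sub (hy : MonotoneOn y (Iic m))
    (hpq : ∀ i x, HasDerivAt (p i) (q i x) x) (hqc : ∀ i, Continuous (q i))
    (hp : ∀ i < m, p i (y (i + 1)) = p (i + 1) (y (i + 1)))
    (hq : ∀ i < m, q i (y (i + 1)) = q (i + 1) (y (i + 1))) (c d : ℝ) :
    ∫ t in c..d, glue y q m t = glue y p m d - glue y p m c :=
  integral_eq_sub_of_hasDerivAt (fun t _ => hasDerivAt_glue hy hpq hp hq t)
    (intervalIntegrable_glue hqc c d)

theorem exists_mem_Ico_of_mem_Ico {x : ℝ} (hx : x ∈ Ico (y 0) (y (m + 1))) :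
    ∃ j ≤ m, x ∈ Ico (y j) (y (j + 1)) := by
  induction m with
  | zero => exact ⟨0, le_rfl, hx⟩
  | succ m ih =>
    by_cases hxm : y (m + 1) ≤ x
    · exact ⟨m + 1, le_rfl, hxm, hx.2⟩
    · obtain ⟨j, hj, hxj⟩ := ih ⟨hx.1, not_le.1 hxm⟩
      exact ⟨j, hj.trans m.le_succ, hxj⟩

theorem exists_mem_Ioo_of_notMem_image {x : ℝ} (hx : x ∈ Ioc (y 0) (y (m + 1)))
    (hxy : x ∉ y '' Iic (m + 1)) : ∃ j ≤ m, x ∈ Ioo (y j) (y (j + 1)) := by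
  have hne : ∀ i ≤ m + 1, x ≠ y i := fun i hi hxi => hxy ⟨i, mem_Iic.2 hi, hxi.symm⟩
  obtain ⟨j, hj, hxj⟩ := exists_mem_Ico_of_mem_Ico
    ⟨hx.1.le, hx.2.lt_of_ne (hne (m + 1) le_rfl)⟩
  exact ⟨j, hj, hxj.1.lt_of_ne (hne j (by omega)).symm, hxj.2⟩

theorem integral_mul_glue_eq_sub (a : ℝ → ℝ) (hy : StrictMonoOn y (Iic (m + 1)))
    (hqr : ∀ i x, HasDerivAt (q i) (r i x) x) (hrc : ∀ i, Continuous (r i))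
    (hq : ∀ i < m, q i (y (i + 1)) = q (i + 1) (y (i + 1)))
    (ha : ∀ i ≤ m, ∀ x ∈ Ioo (y i) (y (i + 1)), a x * p i x = -r i x)
    {x : ℝ} (hx : x ∈ Icc (y 0) (y (m + 1))) :
    ∫ t in y 0..x, a t * glue y p m t = glue y q m (y 0) - glue y q m x := by
  set s := y '' Iic (m + 1)
  have hs : s.Countable := ((finite_Iic (m + 1)).image y).countable
  have hpiece : ∀ (f : ℕ → ℝ → ℝ) {j t}, j ≤ m → t ∈ Ioo (y j) (y (j + 1)) →
      glue y f m t = f j t := fun f j t hj ht =>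
    glue_eq_of_mem_Ico hy.monotoneOn hj (Ioo_subset_Ico_self ht)
  have hqc : ∀ i, Continuous (q i) := fun i =>
    continuous_iff_continuousAt.2 fun t => (hqr i t).continuousAt
  have hderiv : ∀ t ∈ Ioo (y 0) x \ s, HasDerivAt (glue y q m) (glue y r m t) t := by
    rintro t ⟨ht, hts⟩
    obtain ⟨j, hj, htj⟩ := exists_mem_Ioo_of_notMem_image ⟨ht.1, ht.2.le.trans hx.2⟩ hts
    rw [hpiece r hj htj]
    exact (hqr j t).congr_of_eventuallyEq <|
      eventually_of_mem (isOpen_Ioo.mem_nhds htj) fun t' ht' => hpiece q hj ht'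
  have hae : ∀ᵐ t, t ∈ uIoc (y 0) x → a t * glue y p m t = -glue y r m t := by
    filter_upwards [measure_eq_zero_iff_ae_notMem.1 (hs.measure_zero volume)] with t hts ht
    rw [uIoc_of_le hx.1] at ht
    obtain ⟨j, hj, htj⟩ := exists_mem_Ioo_of_notMem_image ⟨ht.1, ht.2.trans hx.2⟩ hts
    rw [hpiece p hj htj, hpiece r hj htj, ha j hj t htj]
  have hcont : Continuous (glue y q m) :=
    continuous_glue (hy.monotoneOn.mono (Iic_subset_Iic.2 m.le_succ)) hqc hq
  rw [integral_congr_ae hae, intervalIntegral.integral_neg,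
    integral_eq_of_hasDerivAt_off_countable_of_le _ _ hx.1 hs hcont.continuousOn hderiv
      (intervalIntegrable_glue hrc _ _), neg_sub]

end Glue

theorem hasDerivAt_mul_cos_mul_sub (k ω c x : ℝ) :
    HasDerivAt (fun x => k * cos (ω * (x - c))) (-(k * ω) * sin (ω * (x - c))) x := by
  have h := (((hasDerivAt_id x).sub_const c).const_mul ω).cos.const_mul k
  simp only [id_eq, mul_one] at h
  exact h.congr_deriv (by ring)

theorem hasDerivAt_mul_sin_mul_sub (k ω c x : ℝ) :
    HasDerivAt (fun x => k * sin (ω * (x - c))) (k * ω * cos (ω * (x - c))) x := by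
  have h := (((hasDerivAt_id x).sub_const c).const_mul ω).sin.const_mul k
  simp only [id_eq, mul_one] at h
  exact h.congr_deriv (by ring)

namespace QuarterWave

variable (y : ℕ → ℝ)

noncomputable def freq (i : ℕ) : ℝ := π / (2 * (y (i + 1) - y i))

noncomputable def crest (i : ℕ) : ℝ := if Even i then y i else y (i + 1)

/-- With `k = amp y` and `ω = freq y`, this makes the pieces match at `y (i + 1)`:
`k (i + 1) * ω (i + 1) = -k i * ω i` at a node (even `i`), `k (i + 1) = k i` at a crest
(odd `i`). -/
noncomputable def amp : ℕ → ℝ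
  | 0 => 1
  | i + 1 => if Even i then -((y (i + 2) - y (i + 1)) / (y (i + 1) - y i)) * amp i else amp i

noncomputable def piece (i : ℕ) (x : ℝ) : ℝ := amp y i * cos (freq y i * (x - crest y i))

noncomputable def pieceDeriv (i : ℕ) (x : ℝ) : ℝ :=
  -(amp y i * freq y i) * sin (freq y i * (x - crest y i))

variable {y}

theorem crest_zero (y : ℕ → ℝ) : crest y 0 = y 0 := if_pos Even.zero

theorem crest_two_mul_add_one (y : ℕ → ℝ) (n : ℕ) : crest y (2 * n + 1) = y (2 * n + 2) :=
  if_neg (Nat.not_even_two_mul_add_one n)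

theorem freq_sq (i : ℕ) : freq y i ^ 2 = π ^ 2 / (4 * (y (i + 1) - y i) ^ 2) := by
  rw [freq, div_pow, mul_pow]; norm_num

theorem freq_mul_sub {i : ℕ} (h : y (i + 1) ≠ y i) : freq y i * (y (i + 1) - y i) = π / 2 := by
  unfold freq; field_simp [sub_ne_zero.2 h]

theorem freq_succ_mul_sub {i : ℕ} (h : y (i + 2) ≠ y (i + 1)) :
    freq y (i + 1) * (y (i + 1) - y (i + 2)) = -(π / 2) := by
  rw [← neg_sub, mul_neg, freq_mul_sub h]

theorem amp_ne_zero {i : ℕ} (h : ∀ j ≤ i, y (j + 1) ≠ y j) : amp y i ≠ 0 := by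
  induction i with
  | zero => exact one_ne_zero
  | succ i ih =>
    have hi := ih fun j hj => h j (by omega)
    unfold amp
    split_ifs
    · exact mul_ne_zero (neg_ne_zero.2 (div_ne_zero (sub_ne_zero.2 (h (i + 1) le_rfl))
        (sub_ne_zero.2 (h i (by omega))))) hi
    · exact hi

theorem hasDerivAt_piece (i : ℕ) (x : ℝ) : HasDerivAt (piece y i) (pieceDeriv y i x) x :=
  hasDerivAt_mul_cos_mul_sub _ _ _ x

theorem hasDerivAt_pieceDeriv (i : ℕ) (x : ℝ) :
    HasDerivAt (pieceDeriv y i) (-freq y i ^ 2 * piece y i x) x :=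
  (hasDerivAt_mul_sin_mul_sub _ _ _ x).congr_deriv (by unfold piece; ring)

theorem continuous_piece (i : ℕ) : Continuous (piece y i) :=
  continuous_iff_continuousAt.2 fun x => (hasDerivAt_piece i x).continuousAt

theorem continuous_pieceDeriv (i : ℕ) : Continuous (pieceDeriv y i) :=
  continuous_iff_continuousAt.2 fun x => (hasDerivAt_pieceDeriv i x).continuousAt

theorem piece_crest (i : ℕ) : piece y i (crest y i) = amp y i := by
  simp [piece]

theorem pieceDeriv_crest (i : ℕ) : pieceDeriv y i (crest y i) = 0 := by
  simp [pieceDeriv]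

theorem piece_eq (i : ℕ) (x : ℝ) : piece y i x = if Even i then
    amp y i * cos (π * (x - y i) / (2 * (y (i + 1) - y i)))
    else amp y i * cos (π * (y (i + 1) - x) / (2 * (y (i + 1) - y i))) := by
  unfold piece crest freq
  split_ifs
  · ring_nf
  · rw [← cos_neg]; ring_nf

theorem piece_succ {i : ℕ} (hi : y (i + 1) ≠ y i) (hi' : y (i + 2) ≠ y (i + 1)) :
    piece y i (y (i + 1)) = piece y (i + 1) (y (i + 1)) := by
  rcases Nat.even_or_odd i with he | ho
  · have he' : ¬Even (i + 1) := Nat.not_even_iff_odd.2 he.add_one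
    simp only [piece, crest, if_pos he, if_neg he']
    rw [freq_mul_sub hi, freq_succ_mul_sub hi', cos_neg, cos_pi_div_two, mul_zero, mul_zero]
  · have he : ¬Even i := Nat.not_even_iff_odd.2 ho
    simp only [piece, crest, amp, if_neg he, if_pos ho.add_one, sub_self, mul_zero]

theorem pieceDeriv_succ {i : ℕ} (hi : y (i + 1) ≠ y i) (hi' : y (i + 2) ≠ y (i + 1)) :
    pieceDeriv y i (y (i + 1)) = pieceDeriv y (i + 1) (y (i + 1)) := by
  rcases Nat.even_or_odd i with he | ho
  · have he' : ¬Even (i + 1) := Nat.not_even_iff_odd.2 he.add_one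
    simp only [pieceDeriv, crest, amp, if_pos he, if_neg he']
    rw [freq_mul_sub hi, freq_succ_mul_sub hi', sin_neg, sin_pi_div_two]
    unfold freq
    field_simp [sub_ne_zero.2 hi, sub_ne_zero.2 hi']
  · have he : ¬Even i := Nat.not_even_iff_odd.2 ho
    simp only [pieceDeriv, crest, if_neg he, if_pos ho.add_one, sub_self, mul_zero, sin_zero]

end QuarterWave

open QuarterWave in
theorem piecewise_constant_has_nontrivial_solution_general (L : ℝ) (n : ℕ)
    (y : ℕ → ℝ) (hy0 : y 0 = 0) (hyL : y (2 * n + 2) = L)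
    (hmono : StrictMonoOn y (Iic (2 * n + 2)))
    (a : ℝ → ℝ)
    (ha : ∀ i ≤ 2 * n + 1, ∀ x ∈ Ioo (y i) (y (i + 1)),
        a x = π ^ 2 / (4 * (y (i + 1) - y i) ^ 2)) :
    ∃ (u v : ℝ → ℝ) (k : ℕ → ℝ),
      (∀ i ≤ 2 * n + 1, k i ≠ 0) ∧
      (∀ x ∈ Icc (0:ℝ) L, u x = u 0 + ∫ t in (0:ℝ)..x, v t) ∧
      (∀ x ∈ Icc (0:ℝ) L, v x = - ∫ t in (0:ℝ)..x, a t * u t) ∧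
      v L = 0 ∧
      (∃ x ∈ Icc (0:ℝ) L, u x ≠ 0) ∧
      (∀ i ≤ 2 * n + 1, ∀ x ∈ Icc (y i) (y (i + 1)),
        u x = if Even i then
            k i * Real.cos (π * (x - y i) / (2 * (y (i + 1) - y i)))
          else
            k i * Real.cos (π * (y (i + 1) - x) / (2 * (y (i + 1) - y i)))) := by
  have hne : ∀ i ≤ 2 * n + 1, y (i + 1) ≠ y i := fun i hi =>
    (hmono (mem_Iic.2 (by omega)) (mem_Iic.2 (by omega)) i.lt_succ_self).ne'
  have hp : ∀ i < 2 * n + 1, piece y i (y (i + 1)) = piece y (i + 1) (y (i + 1)) :=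
    fun i hi => piece_succ (hne i hi.le) (hne (i + 1) hi)
  have hq : ∀ i < 2 * n + 1, pieceDeriv y i (y (i + 1)) = pieceDeriv y (i + 1) (y (i + 1)) :=
    fun i hi => pieceDeriv_succ (hne i hi.le) (hne (i + 1) hi)
  have hamp : ∀ i ≤ 2 * n + 1, amp y i ≠ 0 := fun i hi =>
    amp_ne_zero fun j hj => hne j (hj.trans hi)
  have hmono' : StrictMonoOn y (Iic (2 * n + 1)) := hmono.mono (Iic_subset_Iic.2 (by omega))
  have hIcc : Icc 0 L = Icc (y 0) (y (2 * n + 1 + 1)) := by rw [hy0, ← hyL]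
  refine ⟨glue y (piece y) (2 * n + 1), glue y (pieceDeriv y) (2 * n + 1), amp y, hamp,
    fun x _ => ?_, fun x hx => ?_, ?_, ⟨y 0, ?_, ?_⟩, fun i hi x hx => ?_⟩
  · rw [integral_glue_eq_sub hmono'.monotoneOn hasDerivAt_piece continuous_pieceDeriv hp hq]
    ring
  · rw [← hy0, integral_mul_glue_eq_sub a hmono hasDerivAt_pieceDeriv
      (fun i => continuous_const.mul (continuous_piece i)) hq
      (fun i hi x hx => by rw [ha i hi x hx, ← freq_sq]; ring) (hIcc ▸ hx),
      glue_apply_zero hmono', ← crest_zero y, pieceDeriv_crest]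
    ring
  · rw [← hyL, glue_of_le (hmono.monotoneOn (mem_Iic.2 (by omega)) self_mem_Iic (by omega)),
      ← crest_two_mul_add_one y, pieceDeriv_crest]
  · exact hIcc ▸ left_mem_Icc.2 (hmono (mem_Iic.2 (Nat.zero_le _)) self_mem_Iic (by omega)).le
  · rw [glue_apply_zero hmono', ← crest_zero y, piece_crest]
    exact hamp 0 (by omega)
  · rw [glue_eq_of_mem_Icc hmono hp hi hx, piece_eq]

/-- optimality of the piecewise disfocality criterion: if a equals
π²/(4(y_{i+1}-y_i)²) on each subinterval (y_i, y_{i+1}) of a partition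
0 = y₀ < … < y_{2n+2} = L, then the Neumann problem u'' + au = 0, u'(0) = u'(L) = 0
has a nontrivial solution, given piecewise by cosines with appropriate nonzero
constants k_i. -/
theorem piecewise_constant_has_nontrivial_solution (L : ℝ) (hL : 0 < L) (n : ℕ)
    (y : ℕ → ℝ) (hy0 : y 0 = 0) (hyL : y (2 * n + 2) = L)
    (hmono : StrictMonoOn y (Iic (2 * n + 2)))
    (a : ℝ → ℝ)
    (ha : ∀ i ≤ 2 * n + 1, ∀ x ∈ Ioo (y i) (y (i + 1)),
        a x = π ^ 2 / (4 * (y (i + 1) - y i) ^ 2)) :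
    ∃ (u v : ℝ → ℝ) (k : ℕ → ℝ),
      (∀ i ≤ 2 * n + 1, k i ≠ 0) ∧
      (∀ x ∈ Icc (0:ℝ) L, u x = u 0 + ∫ t in (0:ℝ)..x, v t) ∧
      (∀ x ∈ Icc (0:ℝ) L, v x = - ∫ t in (0:ℝ)..x, a t * u t) ∧
      v L = 0 ∧
      (∃ x ∈ Icc (0:ℝ) L, u x ≠ 0) ∧
      (∀ i ≤ 2 * n + 1, ∀ x ∈ Icc (y i) (y (i + 1)),
        u x = if Even i then
            k i * Real.cos (π * (x - y i) / (2 * (y (i + 1) - y i)))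
          else
            k i * Real.cos (π * (y (i + 1) - x) / (2 * (y (i + 1) - y i)))) :=
  piecewise_constant_has_nontrivial_solution_general L n y hy0 hyL hmono a ha
end
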